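/- Let R be a finite commutative Frobenius ring of characteristic 2, let G be a finite abelian group of order n with a fixed enumeration of its elements, and let v1, v2 ∈ RG. If the code C_σ generated by the rows of M(σ) with A = 0 is self-dual, then v1 + v2 is a unitary unit in RG, i.e. (v1+v2)(v1+v2)* = 1. -/

import Mathlib

open Matrix

/-- The dual of a code (submodule of `ι → R`) with respect to the standard bilinear form. -/
def dualCode {R : Type*} [CommRing R] {ι : Type*} [Fintype ι]
    (C : Submodule R (ι → R)) : Submodule R (ι → R) where
  carrier := {x | ∀ c ∈ C, ∑ i, x i * c i = 0}
  add_mem' := by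
    intro a b ha hb c hc
    simp only [Set.mem_setOf_eq] at ha hb ⊢
    simp [Pi.add_apply, add_mul, Finset.sum_add_distrib, ha c hc, hb c hc]
  zero_mem' := by
    intro c hc
    simp
  smul_mem' := by
    intro r a ha c hc
    simp only [Set.mem_setOf_eq] at ha ⊢
    simp [Pi.smul_apply, smul_eq_mul, mul_assoc, ← Finset.mul_sum, ha c hc]

/-- A code is self-dual if it equals its dual. -/
def IsSelfDual {R : Type*} [CommRing R] {ι : Type*} [Fintype ι]
    (C : Submodule R (ι → R)) : Prop :=
  C = dualCode C

/-- The code generated by the rows of a matrix. -/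
def rowSpan {R : Type*} [CommRing R] {κ ι : Type*} (M : Matrix κ ι R) :
    Submodule R (ι → R) :=
  Submodule.span R (Set.range M)

/-- The matrix `σ(v)` of a group ring element `v` with respect to a fixed enumeration `e`
of the group elements: its `(i,j)` entry is the coefficient of `v` at `(e i)⁻¹ * (e j)`. -/
def sigma {R : Type*} [CommRing R] {G : Type*} [Group G] {ι : Type*}
    (e : ι ≃ G) (v : MonoidAlgebra R G) : Matrix ι ι R :=
  Matrix.of fun i j => v.coeff ((e i)⁻¹ * e j)

/-- The canonical involution `v ↦ v* = ∑ α_g g⁻¹` on a group ring. -/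
def invol {R : Type*} [CommRing R] {G : Type*} [Group G]
    (v : MonoidAlgebra R G) : MonoidAlgebra R G :=
  MonoidAlgebra.ofCoeff (Finsupp.equivMapDomain (Equiv.inv G) v.coeff)

/-!
`sigma e` is the regular representation of `RG`: an injective ring homomorphism into
`ι × ι`-matrices that turns the involution `*` into transposition. Self-duality of the row span
of `(I | X)` gives `(I | X)(I | X)ᵀ = I + XXᵀ = 0`; adding the diagonal and off-diagonal blocks of
`XXᵀ = -I` gives `σ((v₁ + v₂)(v₁ + v₂)*) = σ(v₁ + v₂) σ(v₁ + v₂)ᵀ = -I`, which is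
`I = σ(1)` in characteristic 2.
-/

theorem mul_transpose_eq_zero_of_isSelfDual_rowSpan {R κ ι : Type*} [CommRing R] [Fintype ι]
    {M : Matrix κ ι R} (h : IsSelfDual (rowSpan M)) : M * Mᵀ = 0 := by
  ext r s
  have hs : M s ∈ dualCode (rowSpan M) := h ▸ Submodule.subset_span ⟨s, rfl⟩
  simpa [mul_apply, mul_comm] using hs (M r) (Submodule.subset_span ⟨r, rfl⟩)

theorem mul_transpose_eq_neg_one_of_isSelfDual_rowSpan_fromCols_one {R κ ι : Type*} [CommRing R]
    [Fintype κ] [DecidableEq κ] [Fintype ι] {X : Matrix κ ι R}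
    (h : IsSelfDual (rowSpan (fromCols (1 : Matrix κ κ R) X))) : X * Xᵀ = -1 := by
  have h0 := mul_transpose_eq_zero_of_isSelfDual_rowSpan h
  rw [transpose_fromCols, fromCols_mul_fromRows, transpose_one, one_mul] at h0
  exact eq_neg_of_add_eq_zero_right h0

theorem add_mul_transpose_add_eq_neg_one_of_fromBlocks {R m n : Type*} [CommRing R]
    [Fintype n] [DecidableEq m] {A B : Matrix m n R}
    (h : fromBlocks A B B A * (fromBlocks A B B A)ᵀ = -1) : (A + B) * (A + B)ᵀ = -1 := by
  rw [fromBlocks_transpose, fromBlocks_multiply, ← fromBlocks_one, fromBlocks_neg, neg_zero,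
    fromBlocks_inj] at h
  obtain ⟨hdiag, hoff, -, -⟩ := h
  calc (A + B) * (A + B)ᵀ = (A * Aᵀ + B * Bᵀ) + (A * Bᵀ + B * Aᵀ) := by
        simp only [transpose_add, Matrix.add_mul, Matrix.mul_add]; abel
    _ = -1 := by rw [hdiag, hoff, add_zero]

section RegularRepresentation

variable {R G ι : Type*} [CommRing R] [Group G] (e : ι ≃ G)

theorem sigma_add (v w : MonoidAlgebra R G) : sigma e (v + w) = sigma e v + sigma e w := rfl

theorem sigma_one [DecidableEq ι] : sigma e (1 : MonoidAlgebra R G) = 1 := by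
  ext i j
  classical
  simp [sigma, MonoidAlgebra.one_def, Finsupp.single_apply, one_apply, eq_comm (a := (1 : G)),
    inv_mul_eq_one]

theorem sigma_mul [Fintype ι] (v w : MonoidAlgebra R G) :
    sigma e (v * w) = sigma e v * sigma e w := by
  let := Fintype.ofEquiv ι e
  ext i j
  rw [sigma, of_apply, MonoidAlgebra.coeff_mul_apply_left, Finsupp.sum_fintype _ _ (by simp),
    mul_apply, ← (e.trans (Equiv.mulLeft (e i)⁻¹)).sum_comp]
  simp [sigma, mul_assoc]

theorem sigma_invol (v : MonoidAlgebra R G) : sigma e (invol v) = (sigma e v)ᵀ := by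
  ext i j
  simp [sigma, invol, MonoidAlgebra.coeff_ofCoeff]

theorem sigma_injective : Function.Injective (sigma e : MonoidAlgebra R G → Matrix ι ι R) := by
  intro v w hvw
  ext g
  simpa [sigma] using congr_fun₂ hvw (e.symm 1) (e.symm g)

end RegularRepresentation

theorem unitary_of_selfDual_A_eq_zero_general
    {R : Type*} [CommRing R] [CharP R 2]
    {n : ℕ} {G : Type*} [CommGroup G] (e : Fin n ≃ G)
    (v1 v2 : MonoidAlgebra R G)
    (h : IsSelfDual (rowSpan (Matrix.fromCols (1 : Matrix (Fin n ⊕ Fin n) (Fin n ⊕ Fin n) R)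
        (Matrix.fromBlocks (sigma e v1) (sigma e v2) (sigma e v2) (sigma e v1))))) :
    (v1 + v2) * invol (v1 + v2) = 1 := by
  have hsum : (sigma e v1 + sigma e v2) * (sigma e v1 + sigma e v2)ᵀ = -1 :=
    add_mul_transpose_add_eq_neg_one_of_fromBlocks
      (mul_transpose_eq_neg_one_of_isSelfDual_rowSpan_fromCols_one h)
  apply sigma_injective e
  rw [sigma_mul, sigma_invol, sigma_add, hsum, sigma_one, ← diagonal_one, diagonal_neg]
  simp [CharTwo.neg_eq]

/-- Lemma 2.8: for a finite abelian group, if the code `C_σ` (with `A = 0`) is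
self-dual, then `v₁ + v₂` is a unitary unit: `(v₁+v₂)(v₁+v₂)* = 1`. -/
theorem unitary_of_selfDual_A_eq_zero
    {R : Type*} [CommRing R] [Fintype R] [CharP R 2]
    (hFrob : Module.Injective R R)
    {n : ℕ} {G : Type*} [CommGroup G] [Fintype G] (e : Fin n ≃ G)
    (v1 v2 : MonoidAlgebra R G)
    (h : IsSelfDual (rowSpan (Matrix.fromCols (1 : Matrix (Fin n ⊕ Fin n) (Fin n ⊕ Fin n) R)
        (Matrix.fromBlocks (sigma e v1) (sigma e v2) (sigma e v2) (sigma e v1))))) :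
    (v1 + v2) * invol (v1 + v2) = 1 :=
  unitary_of_selfDual_A_eq_zero_general e v1 v2 h
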